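/- Let t, s, u be integers with t ≥ 2, u ≥ 0, s ≥ 0 and u + s ≤ t − 2. Then Σ_{r=0}^{t−u−s−1} (−1)^r·(6/π)^{2r}·binom(−1/2−r, t−u−s−r−1) = −(−1)^{s+t+u}·π^{2+2s−2t+2u}·(36+π²)^{t−u−s−1} − (−1)^{s+u}·π^{2+2s+2u}·(36+π²)^{−1−s−u}·binom(−1/2, t)/(2t−1) + (−1)^{s+t+u}·π^{2+2s−2t+2u}·(36+π²)^{t−u−s−1}·Σ_{i=1}^{t} π^{2i}·(−1/(36+π²))^i·binom(−1/2, i)/(2i−1) + (1/2)·(−1)^{s+u}·π^{2+2s+2u}·(36+π²)^{−1−s−u}·Σ_{i=1}^{u} π^{−2i}·(−36−π²)^i·binom(−1/2, t−1−i)/(t−i) + (1/2)·(−1)^{s}·π^{2+2s}·(36+π²)^{−1−s}·Σ_{i=1}^{s} π^{−2i}·(−36−π²)^i·binom(−1/2, t−u−1−i)/(t−u−i). -/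

import Mathlib

open Real BigOperators Finset

noncomputable section

/-- The partition function `p(n)`. -/
def pp (n : ℕ) : ℕ := Fintype.card (Nat.Partition n)

/-- `μ(n) = (π/6)·√(24n−1)`. -/
def μ (n : ℕ) : ℝ := π / 6 * Real.sqrt (24 * (n : ℝ) - 1)

/-- `α = π/6`. -/
def αc : ℝ := π / 6

/-- Rising factorial `(a)_m`. -/
def rf (a : ℝ) : ℕ → ℝ
  | 0 => 1
  | m + 1 => rf a m * (a + (m : ℝ))

/-- Falling factorial `x(x−1)⋯(x−n+1)`. -/
def ff (x : ℝ) : ℕ → ℝ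
  | 0 => 1
  | n + 1 => ff x n * (x - (n : ℝ))

/-- Generalized binomial coefficient for real `x`. -/
def gbinom (x : ℝ) (n : ℕ) : ℝ := ff x n / (Nat.factorial n : ℝ)

/-- The coefficients `ω_k(t)`. -/
def ω (k t : ℕ) : ℝ :=
  ((24 * (k : ℝ) - 1) / (4 * Real.sqrt 6)) ^ t *
    ∑ l ∈ Finset.range ((t + 1) / 2 + 1),
      (Nat.choose (t + 1) l : ℝ) * ((t + 1 - l : ℕ) : ℝ) /
          (Nat.factorial (t + 1 - 2 * l) : ℝ) *
        (-1 : ℝ) ^ l * (π / 6) ^ ((t : ℤ) - 2 * (l : ℤ)) *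
        (24 * (k : ℝ) - 1) ^ (-(l : ℤ))

/-- `E_1(t)`. -/
def E1 (t : ℕ) : ℝ :=
  if t = 0 then 1
  else
    (-1 / 24 : ℝ) ^ t * (rf (1 / 2 - (t : ℝ)) (t + 1) / (t : ℝ)) *
      ∑ u ∈ Finset.Icc 1 t,
        (-1 : ℝ) ^ u * rf (-(t : ℝ)) u * αc ^ (2 * u) /
          ((Nat.factorial (t + u) : ℝ) * (Nat.factorial (2 * u - 1) : ℝ))

/-- `O_1(t)`. -/
def O1 (t : ℕ) : ℝ :=
  π / (12 * Real.sqrt 6) * ((-1 : ℝ) ^ t * rf (1 / 2 - (t : ℝ)) (t + 1) / 24 ^ t) *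
    ∑ u ∈ Finset.range (t + 1),
      (-1 : ℝ) ^ u * rf (-(t : ℝ)) u * αc ^ (2 * u) /
        ((Nat.factorial (t + u + 1) : ℝ) * (Nat.factorial (2 * u) : ℝ))

/-- `e_2(t)`. -/
def e2 (t : ℕ) : ℝ :=
  if t = 0 then 1 else 36 / (π ^ 2 + 36) * ((1 + (αc ^ 2)⁻¹) / 24) ^ t

/-- `o_2(t)`. -/
def o2 (t : ℕ) : ℝ :=
  6 / (π * Real.sqrt 24) * (-1 / 24 : ℝ) ^ t *
    ∑ m ∈ Finset.range (t + 1),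
      (-(αc ^ 2)⁻¹) ^ m * gbinom (-(2 * (m : ℝ) + 1) / 2) (t - m)

/-- `E_2(t)`. -/
def E2 (t : ℕ) : ℝ :=
  if t = 0 then 1
  else if t = 1 then (36 - π ^ 2) / (24 * π ^ 2)
  else 54 / (π ^ 4 * (1 + (αc ^ 2)⁻¹)) * ((1 + (αc ^ 2)⁻¹) / 24) ^ (t - 1)

/-- `O_2(t)`. -/
def O2 (t : ℕ) : ℝ := if t = 0 then o2 0 else o2 t - o2 (t - 1) / 24

/-- `h_1` with `h_1(2t) = E_1(t)`, `h_1(2t+1) = O_1(t)`. -/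
def h1 (n : ℕ) : ℝ := if n % 2 = 0 then E1 (n / 2) else O1 (n / 2)

/-- `h_2` with `h_2(2t) = E_2(t)`, `h_2(2t+1) = O_2(t)`. -/
def h2 (n : ℕ) : ℝ := if n % 2 = 0 then E2 (n / 2) else O2 (n / 2)

/-- `g(t) = Σ_{s=0}^t h_1(s) h_2(t−s)`. -/
def g (t : ℕ) : ℝ := ∑ s ∈ Finset.range (t + 1), h1 s * h2 (t - s)

/-- `ν(m)`. -/
def ν (m : ℕ) : ℝ :=
  2 * Real.log 6 + 2 * Real.log 2 * (m : ℝ) + 2 * (m : ℝ) * Real.log (m : ℝ) +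
    2 * (m : ℝ) * Real.log (Real.log (m : ℝ)) +
    5 * (m : ℝ) * Real.log (Real.log (m : ℝ)) / Real.log (m : ℝ)

/-- `ĝ(m)`. -/
def ghat (m : ℕ) : ℝ := 1 / 24 * (36 / π ^ 2 * ν m ^ 2 + 1)

/-- `α_k = (π/6)√(24k−1)`. -/
def αk (k : ℕ) : ℝ := π / 6 * Real.sqrt (24 * (k : ℝ) - 1)

/-- `C_1(k)`. -/
def C1 (k : ℕ) : ℝ :=
  3 * (k : ℝ) * (3 * (⌈Real.sqrt (k : ℝ)⌉₊ : ℝ) + 1) ^ 2 *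
      αk k ^ (6 * ⌈Real.sqrt (k : ℝ)⌉₊ + 4) /
    (2 * (⌈Real.sqrt (k : ℝ)⌉₊ : ℝ) * (Nat.factorial (6 * ⌈Real.sqrt (k : ℝ)⌉₊ + 4) : ℝ))

/-- `C_1*(k)`. -/
def C1s (k : ℕ) : ℝ :=
  (αk k ^ 2 * (Real.cosh (αk k) - 1) + 4 * C1 k) / (4 * |Real.cos (αk k)|)

/-- `C_2(k)`. -/
def C2 (k : ℕ) : ℝ :=
  9 * (k : ℝ) * (3 * (⌈Real.sqrt (k : ℝ)⌉₊ : ℝ) + 1) ^ 2 *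
      αk k ^ (6 * ⌈Real.sqrt (k : ℝ)⌉₊ + 3) /
    ((6 * (⌈Real.sqrt (k : ℝ)⌉₊ : ℝ) + 1) * (Nat.factorial (6 * ⌈Real.sqrt (k : ℝ)⌉₊ + 3) : ℝ))

/-- `C_2*(k)`. -/
def C2s (k : ℕ) : ℝ :=
  1 / 2 * (1 + 3 * (αk k ^ 2 * Real.sinh (αk k) + 4 * C2 k) / (4 * |Real.sin (αk k)|))

/-- `C_e(k)`. -/
def Ce (k : ℕ) : ℝ := 2 * C2s k + (24 * (k : ℝ) - 1) * (1 + C2s k) / 6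

/-- `C_o(k)`. -/
def Co (k : ℕ) : ℝ := 2 * C1s k + (24 * (k : ℝ) - 1) * (1 + 2 * C1s k) / 6

/-- `E_{N,1,e}(k)`. -/
def EN1e (N k : ℕ) : ℝ :=
  Real.sqrt 2 * |Real.sin (αk k)| / (Real.sqrt π * αk k) *
    ((24 * (k : ℝ) - 1) / 24) ^ (((N : ℝ) + 1) / 2) * Real.sqrt ((N : ℝ) + 1) *
    (1 + Ce k / (N : ℝ))

/-- `E_{N,1,o}(k)`. -/
def EN1o (N k : ℕ) : ℝ :=
  Real.sqrt (3 / π ^ 3) * |Real.cos (αk k)| *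
    ((24 * (k : ℝ) - 1) / 24) ^ ((N : ℝ) / 2) * Real.sqrt ((N : ℝ) + 2) *
    (1 + Co k / (N : ℝ))

/-- `E_{N,1}(k)`. -/
def EN1 (N k : ℕ) : ℝ := EN1e N k + EN1o N k

/-- `C_1(α)`. -/
def Cal1 : ℝ :=
  3 * (Real.cosh (Real.sqrt (1 + αc ^ 2) - 1) + Real.sinh (Real.sqrt (1 + αc ^ 2) - 1)) /
    (2 * π ^ 2 * (1 + αc ^ 2))

/-- `C_2(α)`. -/
def Cal2 : ℝ :=
  1 / π * Real.sqrt (3 / 2) *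
    (Real.cosh (Real.sqrt (1 + αc ^ 2) - 1) + Real.sinh (Real.sqrt (1 + αc ^ 2) - 1)) /
    (1 + αc ^ 2) ^ ((3 : ℝ) / 2)

/-- `E_N^{[2]}`. -/
def EN2 (N : ℕ) : ℝ :=
  Cal1 * ((1 + αc ^ 2) / (24 * αc ^ 2)) ^ (((N : ℝ) - 1) / 2) * (1 + 8 / (N : ℝ)) +
  Cal2 * ((1 + αc ^ 2) / (24 * αc ^ 2)) ^ ((N : ℝ) / 2) * (1 + 3 / (N : ℝ)) +
  (6 / (π * Real.sqrt 24)) ^ (N + 1) * (1 + 4 / (N : ℝ))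

/-- Coefficients `c_k(m) = Σ_{s=0}^m ω_k(s) g(m−s)`. -/
def ck (k m : ℕ) : ℝ := ∑ s ∈ Finset.range (m + 1), ω k s * g (m - s)

/-!
Put `n = t - u - s - 1` and `ρ = -π² / (36 + π²)`. With `x = -1/2` and `y = -36/π²` the left
side is `∑_{r ≤ n} y^r binom(x - r, n - r)`, the coefficient of `z^n` in
`(1 + z)^(x + 1) / (1 - (y - 1) z)`; so it equals
`∑_{j ≤ n} binom(x + 1, j) (y - 1)^(n - j) = ρ^(-n) ∑_{j ≤ n} binom(1/2, j) ρ^j`.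
On the right, `binom(-1/2, i) / (2i - 1) = -binom(1/2, i)` and
`binom(-1/2, k) / (k + 1) = 2 binom(1/2, k + 1)` turn each term into `ρ^(-n)` times a piece of the
same series: its terms `j = 0` and `j = t`, its block `1 ≤ j ≤ t`, and its blocks `n < j ≤ n + s`
and `n + s < j < t`, which together leave `j ≤ n`.
-/

theorem pow_mul_inv_pow_eq_inv_pow_mul_pow {G : Type*} [CommGroupWithZero G] {x : G} (hx : x ≠ 0)
    {a b c d : ℕ} (h : a + c = b + d) : x ^ a * x⁻¹ ^ b = x⁻¹ ^ c * x ^ d := by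
  rw [inv_pow, inv_pow, ← div_eq_mul_inv, inv_mul_eq_div,
    div_eq_div_iff (pow_ne_zero _ hx) (pow_ne_zero _ hx), ← pow_add, ← pow_add, h, add_comm]

theorem sum_Icc_one_sub {M : Type*} [AddCommMonoid M] (f : ℕ → M) {k b : ℕ} (h : k ≤ b) :
    ∑ i ∈ Icc 1 k, f (b - i) = ∑ j ∈ Ico (b - k) b, f j := by
  rw [← Ico_add_one_right_eq_Icc, sum_Ico_reflect f 1 (by omega), Nat.add_sub_add_right,
    Nat.add_sub_cancel]

theorem sum_range_add_sum_Icc_add_sum_Icc {M : Type*} [AddCommMonoid M] (f : ℕ → M)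
    {s t u : ℕ} (h : u + s ≤ t) :
    ∑ j ∈ range (t - u - s), f j + ∑ i ∈ Icc 1 s, f (t - u - i) + ∑ i ∈ Icc 1 u, f (t - i) =
      ∑ j ∈ range t, f j := by
  rw [sum_Icc_one_sub f (by omega), sum_Icc_one_sub f (by omega), range_eq_Ico, range_eq_Ico,
    sum_Ico_consecutive _ (Nat.zero_le _) (by omega),
    sum_Ico_consecutive _ (Nat.zero_le _) (Nat.sub_le t u)]

theorem ff_eq_smeval_descPochhammer (x : ℝ) (n : ℕ) :
    ff x n = (descPochhammer ℤ n).smeval x := by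
  induction n with
  | zero => simp [ff]
  | succ n ih =>
    rw [ff, ih, descPochhammer_succ_right, Polynomial.smeval_mul, Polynomial.smeval_sub,
      Polynomial.smeval_X, Polynomial.smeval_natCast]
    simp

theorem gbinom_eq_choose (x : ℝ) (n : ℕ) : gbinom x n = Ring.choose x n := by
  rw [Ring.choose_eq_smul, gbinom, ff_eq_smeval_descPochhammer, smul_eq_mul, div_eq_inv_mul]

theorem gbinom_zero_right (x : ℝ) : gbinom x 0 = 1 := by
  simp [gbinom_eq_choose]

theorem gbinom_succ_succ (x : ℝ) (k : ℕ) :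
    gbinom (x + 1) (k + 1) = gbinom x k + gbinom x (k + 1) := by
  simpa only [gbinom_eq_choose] using Ring.choose_succ_succ x k

theorem succ_mul_gbinom_succ (x : ℝ) (n : ℕ) :
    (n + 1) * gbinom x (n + 1) = x * gbinom (x - 1) n := by
  simpa [gbinom_eq_choose] using Ring.choose_smul_choose x (Nat.le_add_left 1 n)

theorem gbinom_half_succ (n : ℕ) :
    gbinom (1 / 2) (n + 1) = gbinom (-1 / 2) n / (2 * (n + 1)) := by
  have h := succ_mul_gbinom_succ (1 / 2) n
  rw [show (1 / 2 : ℝ) - 1 = -1 / 2 by norm_num] at h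
  field_simp
  linarith

theorem gbinom_neg_half (n : ℕ) : gbinom (-1 / 2) n = (1 - 2 * n) * gbinom (1 / 2) n := by
  cases n with
  | zero => simp [gbinom_zero_right]
  | succ n =>
    have h := gbinom_succ_succ (-1 / 2) n
    rw [show (-1 / 2 : ℝ) + 1 = 1 / 2 by norm_num, gbinom_half_succ] at h
    rw [gbinom_half_succ]
    push_cast
    field_simp at h ⊢
    linarith

theorem gbinom_neg_half_div (n : ℕ) : gbinom (-1 / 2) n / (2 * n - 1) = -gbinom (1 / 2) n := by
  have hn : (2 * n - 1 : ℝ) ≠ 0 := by exact_mod_cast (by omega : (2 * n - 1 : ℤ) ≠ 0)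
  rw [gbinom_neg_half, div_eq_iff hn]
  ring

theorem sum_gbinom_mul_pow_succ (x w : ℝ) (n : ℕ) :
    ∑ j ∈ range (n + 2), gbinom x j * w ^ (n + 1 - j) =
      w * ∑ j ∈ range (n + 1), gbinom x j * w ^ (n - j) + gbinom x (n + 1) := by
  rw [sum_range_succ, mul_sum, Nat.sub_self, pow_zero, mul_one]
  congr 1
  refine sum_congr rfl fun j hj => ?_
  rw [Nat.sub_add_comm (mem_range_succ_iff.mp hj), pow_succ]
  ring

theorem sum_gbinom_add_one_mul_pow (x w : ℝ) (n : ℕ) :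
    ∑ j ∈ range (n + 2), gbinom (x + 1) j * w ^ (n + 1 - j) =
      ∑ j ∈ range (n + 2), gbinom x j * w ^ (n + 1 - j) +
        ∑ j ∈ range (n + 1), gbinom x j * w ^ (n - j) := by
  rw [sum_range_succ', sum_range_succ' _ (n + 1)]
  simp only [gbinom_succ_succ, add_mul, sum_add_distrib, gbinom_zero_right, Nat.add_sub_add_right]
  ring

theorem sum_pow_mul_gbinom_sub (x y : ℝ) (n : ℕ) :
    ∑ r ∈ range (n + 1), y ^ r * gbinom (x - r) (n - r) =
      ∑ j ∈ range (n + 1), gbinom (x + 1) j * (y - 1) ^ (n - j) := by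
  induction n generalizing x with
  | zero => simp [gbinom_zero_right]
  | succ n ih =>
    have hshift (r : ℕ) : x - ((r + 1 : ℕ) : ℝ) = x - 1 - r := by
      push_cast
      ring
    rw [sum_range_succ', sum_gbinom_add_one_mul_pow, sum_gbinom_mul_pow_succ]
    simp only [hshift, Nat.add_sub_add_right, pow_succ', mul_assoc, ← mul_sum, ih,
      sub_add_cancel, pow_zero, one_mul, Nat.cast_zero, sub_zero, Nat.sub_zero]
    ring

def ρ : ℝ := -π ^ 2 / (36 + π ^ 2)

theorem ρ_ne_zero : ρ ≠ 0 :=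
  div_ne_zero (neg_ne_zero.mpr (pow_ne_zero _ pi_ne_zero)) (by positivity)

theorem ρ_pow (k : ℕ) : ρ ^ k = (-1) ^ k * π ^ (2 * k) / (36 + π ^ 2) ^ k := by
  rw [ρ, div_pow, neg_pow, pow_mul]

theorem inv_ρ_pow (k : ℕ) : ρ⁻¹ ^ k = (-1) ^ k * (36 + π ^ 2) ^ k / π ^ (2 * k) := by
  rw [ρ, inv_div, div_neg, ← neg_div, div_pow, neg_pow, pow_mul]

theorem sum_neg_one_pow_mul_gbinom (n : ℕ) :
    ∑ r ∈ range (n + 1), (-1 : ℝ) ^ r * (6 / π) ^ (2 * r) * gbinom (-1 / 2 - r) (n - r) =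
      ρ⁻¹ ^ n * ∑ j ∈ range (n + 1), gbinom (1 / 2) j * ρ ^ j := by
  have hy (r : ℕ) : (-1 : ℝ) ^ r * (6 / π) ^ (2 * r) = (-36 / π ^ 2) ^ r := by
    rw [pow_mul, ← mul_pow]
    ring
  have hρ : -36 / π ^ 2 - 1 = ρ⁻¹ := by
    rw [ρ, inv_div]
    field_simp
    ring
  simp_rw [hy, sum_pow_mul_gbinom_sub, hρ, mul_sum]
  refine sum_congr rfl fun j hj => ?_
  rw [inv_pow_sub₀ ρ_ne_zero (mem_range_succ_iff.mp hj), inv_pow,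
    show (-1 / 2 : ℝ) + 1 = 1 / 2 by norm_num]
  ring

theorem neg_one_pow_mul_pi_zpow_mul_pow {s t u : ℕ} (h : u + s < t) :
    (-1 : ℝ) ^ (s + t + u) * π ^ ((2 : ℤ) + 2 * (s : ℤ) - 2 * (t : ℤ) + 2 * (u : ℤ)) *
      (36 + π ^ 2) ^ (t - u - s - 1) = -ρ⁻¹ ^ (t - u - s - 1) := by
  obtain ⟨n, rfl⟩ : ∃ n, t = n + 1 + s + u := ⟨t - u - s - 1, by omega⟩
  rw [show n + 1 + s + u - u - s - 1 = n by omega,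
    show s + (n + 1 + s + u) + u = n + 1 + 2 * (s + u) by ring,
    show (2 : ℤ) + 2 * (s : ℤ) - 2 * ((n + 1 + s + u : ℕ) : ℤ) + 2 * (u : ℤ) = -((2 * n : ℕ) : ℤ)
      by push_cast; ring,
    zpow_neg, zpow_natCast, pow_add, pow_mul, neg_one_sq, one_pow, mul_one, inv_ρ_pow]
  ring

theorem neg_one_pow_mul_pi_pow_mul_zpow (k : ℕ) :
    (-1 : ℝ) ^ k * π ^ (2 + 2 * k) * (36 + π ^ 2) ^ (-(1 : ℤ) - (k : ℤ)) = -ρ ^ (k + 1) := by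
  rw [show -(1 : ℤ) - (k : ℤ) = -((k + 1 : ℕ) : ℤ) by push_cast; ring, zpow_neg, zpow_natCast,
    ρ_pow, pow_succ (-1 : ℝ), show 2 * (k + 1) = 2 + 2 * k by ring]
  ring

theorem pi_pow_mul_gbinom_div (i : ℕ) :
    π ^ (2 * i) * (-(36 + π ^ 2)⁻¹) ^ i * gbinom (-1 / 2) i / (2 * (i : ℝ) - 1) =
      -(gbinom (1 / 2) i * ρ ^ i) := by
  rw [mul_div_assoc, gbinom_neg_half_div, ρ_pow, neg_pow, inv_pow]
  ring

theorem pi_zpow_mul_gbinom_div (i k : ℕ) :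
    π ^ (-(2 : ℤ) * (i : ℤ)) * (-36 - π ^ 2) ^ i * gbinom (-1 / 2) k / ((k : ℝ) + 1) =
      2 * ρ⁻¹ ^ i * gbinom (1 / 2) (k + 1) := by
  rw [show -(2 : ℤ) * (i : ℤ) = -((2 * i : ℕ) : ℤ) by push_cast; ring, zpow_neg, zpow_natCast,
    gbinom_half_succ, inv_ρ_pow, show (-36 - π ^ 2 : ℝ) = -(36 + π ^ 2) by ring, neg_pow]
  field_simp

theorem neg_one_pow_mul_pi_pow_mul_gbinom_div {s t u : ℕ} (h : u + s < t) :
    (-1 : ℝ) ^ (s + u) * π ^ (2 + 2 * s + 2 * u) *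
        (36 + π ^ 2) ^ (-(1 : ℤ) - (s : ℤ) - (u : ℤ)) * gbinom (-1 / 2) t / (2 * (t : ℝ) - 1) =
      ρ⁻¹ ^ (t - u - s - 1) * (gbinom (1 / 2) t * ρ ^ t) := by
  rw [show 2 + 2 * s + 2 * u = 2 + 2 * (s + u) by ring,
    show -(1 : ℤ) - (s : ℤ) - (u : ℤ) = -(1 : ℤ) - ((s + u : ℕ) : ℤ) by push_cast; ring,
    neg_one_pow_mul_pi_pow_mul_zpow, mul_div_assoc, gbinom_neg_half_div]
  linear_combination gbinom (1 / 2) t * pow_mul_inv_pow_eq_inv_pow_mul_pow ρ_ne_zero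
    (a := s + u + 1) (b := 0) (c := t - u - s - 1) (d := t) (by omega)

theorem half_mul_sum_pi_zpow_mul_gbinom_div {k m T : ℕ} (hk : k < T) (hm : m < T) :
    1 / 2 * (-1 : ℝ) ^ m * π ^ (2 + 2 * m) * (36 + π ^ 2) ^ (-(1 : ℤ) - (m : ℤ)) *
      ∑ i ∈ Icc 1 k, π ^ (-(2 : ℤ) * (i : ℤ)) * (-36 - π ^ 2) ^ i * gbinom (-1 / 2) (T - 1 - i) /
        ((T : ℝ) - i) =
      -(ρ⁻¹ ^ (T - m - 1) * ∑ i ∈ Icc 1 k, gbinom (1 / 2) (T - i) * ρ ^ (T - i)) := by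
  rw [mul_assoc (1 / 2 : ℝ), mul_assoc (1 / 2 : ℝ), neg_one_pow_mul_pi_pow_mul_zpow, mul_sum,
    mul_sum, ← sum_neg_distrib]
  refine sum_congr rfl fun i hi => ?_
  obtain ⟨-, hik⟩ := mem_Icc.mp hi
  have hT : (T : ℝ) - i = ((T - 1 - i : ℕ) : ℝ) + 1 := by
    rw [Nat.cast_sub (by omega), Nat.cast_sub (by omega)]
    push_cast
    ring
  rw [hT, pi_zpow_mul_gbinom_div, show T - 1 - i + 1 = T - i by omega]
  linear_combination -gbinom (1 / 2) (T - i) * pow_mul_inv_pow_eq_inv_pow_mul_pow ρ_ne_zero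
    (a := m + 1) (b := i) (c := T - m - 1) (d := T - i) (by omega)

/-- closed form of the inner sum `U(t,s,u)` (Sigma simplification). -/
theorem U_closed_form (t s u : ℕ) (ht : 2 ≤ t) (hsu : u + s ≤ t - 2) :
    (∑ r ∈ Finset.range (t - u - s),
        (-1 : ℝ) ^ r * (6 / π) ^ (2 * r) * gbinom (-1 / 2 - (r : ℝ)) (t - u - s - r - 1)) =
      -((-1 : ℝ) ^ (s + t + u) * π ^ ((2 : ℤ) + 2 * (s : ℤ) - 2 * (t : ℤ) + 2 * (u : ℤ)) *
            (36 + π ^ 2) ^ (t - u - s - 1))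
      - (-1 : ℝ) ^ (s + u) * π ^ (2 + 2 * s + 2 * u) *
          (36 + π ^ 2) ^ (-(1 : ℤ) - (s : ℤ) - (u : ℤ)) * gbinom (-1 / 2) t /
          (2 * (t : ℝ) - 1)
      + (-1 : ℝ) ^ (s + t + u) * π ^ ((2 : ℤ) + 2 * (s : ℤ) - 2 * (t : ℤ) + 2 * (u : ℤ)) *
          (36 + π ^ 2) ^ (t - u - s - 1) *
          ∑ i ∈ Finset.Icc 1 t,
            π ^ (2 * i) * (-(36 + π ^ 2)⁻¹) ^ i * gbinom (-1 / 2) i / (2 * (i : ℝ) - 1)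
      + 1 / 2 * (-1 : ℝ) ^ (s + u) * π ^ (2 + 2 * s + 2 * u) *
          (36 + π ^ 2) ^ (-(1 : ℤ) - (s : ℤ) - (u : ℤ)) *
          ∑ i ∈ Finset.Icc 1 u,
            π ^ (-(2 : ℤ) * (i : ℤ)) * (-36 - π ^ 2) ^ i * gbinom (-1 / 2) (t - 1 - i) /
              ((t : ℝ) - (i : ℝ))
      + 1 / 2 * (-1 : ℝ) ^ s * π ^ (2 + 2 * s) * (36 + π ^ 2) ^ (-(1 : ℤ) - (s : ℤ)) *
          ∑ i ∈ Finset.Icc 1 s,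
            π ^ (-(2 : ℤ) * (i : ℤ)) * (-36 - π ^ 2) ^ i * gbinom (-1 / 2) (t - u - 1 - i) /
              ((t : ℝ) - (u : ℝ) - (i : ℝ)) := by
  have h : u + s < t := by omega
  obtain ⟨n, hn⟩ : ∃ n, t - u - s = n + 1 := ⟨t - u - s - 1, by omega⟩
  have hlhs : ∑ r ∈ range (t - u - s),
      (-1 : ℝ) ^ r * (6 / π) ^ (2 * r) * gbinom (-1 / 2 - (r : ℝ)) (t - u - s - r - 1) =
      ∑ r ∈ range (n + 1), (-1 : ℝ) ^ r * (6 / π) ^ (2 * r) * gbinom (-1 / 2 - r) (n - r) := by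
    rw [hn]
    exact sum_congr rfl fun r _ => by rw [Nat.sub_right_comm, Nat.add_sub_cancel]
  rw [hlhs, sum_neg_one_pow_mul_gbinom, neg_one_pow_mul_pi_zpow_mul_pow h,
    neg_one_pow_mul_pi_pow_mul_gbinom_div h, show 2 + 2 * s + 2 * u = 2 + 2 * (s + u) by ring,
    show -(1 : ℤ) - (s : ℤ) - (u : ℤ) = -(1 : ℤ) - ((s + u : ℕ) : ℤ) by push_cast; ring,
    half_mul_sum_pi_zpow_mul_gbinom_div (k := u) (T := t) (by omega) (by omega),
    ← Nat.cast_sub (by omega : u ≤ t),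
    half_mul_sum_pi_zpow_mul_gbinom_div (k := s) (T := t - u) (by omega) (by omega),
    show t - (s + u) - 1 = n by omega, show t - u - s - 1 = n by omega]
  simp_rw [pi_pow_mul_gbinom_div, sum_neg_distrib]
  have hsplit := sum_range_add_sum_Icc_add_sum_Icc (fun j => gbinom (1 / 2) j * ρ ^ j) h.le
  rw [hn] at hsplit
  have hIcc : ∑ i ∈ Icc 1 t, gbinom (1 / 2) i * ρ ^ i =
      ∑ j ∈ range t, gbinom (1 / 2) j * ρ ^ j + gbinom (1 / 2) t * ρ ^ t - 1 := by
    rw [← Ico_add_one_right_eq_Icc, sum_Ico_eq_sub _ (by omega), sum_range_succ, sum_range_one,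
      gbinom_zero_right]
    ring
  linear_combination ρ⁻¹ ^ n * (hsplit - hIcc)
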